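/- Let f*_{A,i*} ∈ ℝ^d (i* ∈ {1,…,n_A*}) and f*_{B,j*} ∈ ℝ^d (j* ∈ {1,…,n_B*}) be fixed feature vectors, and let p_A, p_B be probability vectors on {1,…,n_A*} and {1,…,n_B*} with strictly positive entries. Let (ι_k)_{k≥1} and (κ_l)_{l≥1} be independent i.i.d. sequences with laws p_A and p_B, and for sample sizes n_A, n_B set f_{A,k} = f*_{A,ι_k} (k ≤ n_A) and f_{B,l} = f*_{B,κ_l} (l ≤ n_B). Fix a dustbin score α ∈ ℝ, a regularization parameter ε > 0, and a number of Sinkhorn iterations L ∈ ℕ. Let OT denote the assignment matrix computed by L Sinkhorn iterations on the α-augmented score matrix of the sampled features with uniform marginals (a_k = 1/n_A for k ≤ n_A, a_{n_A+1} = 1; b_l = 1/n_B for l ≤ n_B, b_{n_B+1} = 1), and let OT^{p_A,p_B} denote the assignment computed by L Sinkhorn iterations on the α-augmented score matrix of the fixed features with marginals (a*_{i*} = p_A(i*), a*_{n_A*+1} = 1; b*_{j*} = p_B(j*), b*_{n_B*+1} = 1). Then for every i* ∈ {1,…,n_A*} and j* ∈ {1,…,n_B*}, as n_A, n_B → ∞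 jointly, Σ_{k ≤ n_A : ι_k = i*} Σ_{l ≤ n_B : κ_l = j*} OT_{k,l} → OT^{p_A,p_B}_{i*,j*} in probability. -/

import Mathlib

open MeasureTheory Filter Finset ProbabilityTheory

noncomputable section

/-- `X` converges to `Y` in probability (w.r.t. the measure `P`) along the filter `l`. -/
def TendstoInProb {Ω : Type*} [MeasurableSpace Ω] (P : Measure Ω)
    {ι : Type*} (l : Filter ι) {E : Type*} [Dist E]
    (X : ι → Ω → E) (Y : Ω → E) : Prop :=
  ∀ ε : ℝ, 0 < ε → Tendsto (fun n => P {ω | ε < dist (X n ω) (Y ω)}) l (nhds 0)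

/-- `L` Sinkhorn iterations for a kernel matrix with rows `0,…,nA` and columns `0,…,nB`
(the indices `nA` and `nB` playing the role of the dustbin row/column), marginals `a`, `b`,
initialized at `u = a`, `v = b`; each iteration performs `uᵢ ← aᵢ/(Kv)ᵢ` and then
`vⱼ ← bⱼ/(Kᵀu)ⱼ` (with the updated `u`).  Matrices and vectors are modelled as functions
on `ℕ`; only the entries with index `≤ nA` (resp. `≤ nB`) are relevant. -/
def sinkhorn (nA nB : ℕ) (Km : ℕ → ℕ → ℝ) (a b : ℕ → ℝ) : ℕ → (ℕ → ℝ) × (ℕ → ℝ)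
  | 0 => (a, b)
  | L + 1 =>
    let uv := sinkhorn nA nB Km a b L
    let u : ℕ → ℝ := fun i => a i / ∑ j ∈ Finset.range (nB + 1), Km i j * uv.2 j
    let v : ℕ → ℝ := fun j => b j / ∑ i ∈ Finset.range (nA + 1), Km i j * u i
    (u, v)

/-- The `α`-augmented score matrix of the sampled features: entry `(i,j)` equals
`⟨f_{A,i}, f_{B,j}⟩` for `i < nA`, `j < nB` and the dustbin score `α` on the last row and
column. -/
def sampledScore {Ωt : Type*} {d nAs nBs : ℕ}
    (fAstar : Fin nAs → Fin d → ℝ) (fBstar : Fin nBs → Fin d → ℝ) (α : ℝ)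
    (ι : ℕ → Ωt → Fin nAs) (κ : ℕ → Ωt → Fin nBs)
    (nA nB : ℕ) (ω : Ωt) : ℕ → ℕ → ℝ := fun i j =>
  if i < nA ∧ j < nB then ∑ a, fAstar (ι i ω) a * fBstar (κ j ω) a else α

/-- The `α`-augmented score matrix of the fixed features, as a function on `ℕ × ℕ`
(rows `0,…,nAs`, columns `0,…,nBs`, with dustbin row `nAs` and dustbin column `nBs`). -/
def fixedScore {d nAs nBs : ℕ}
    (fAstar : Fin nAs → Fin d → ℝ) (fBstar : Fin nBs → Fin d → ℝ) (α : ℝ) :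
    ℕ → ℕ → ℝ := fun i j =>
  if h : i < nAs then
    if h' : j < nBs then ∑ a, fAstar ⟨i, h⟩ a * fBstar ⟨j, h'⟩ a else α
  else α

/-- Uniform marginals with a unit dustbin entry: `aᵢ = 1/n` for `i < n`, and `1` otherwise
(in particular at the dustbin index `n`). -/
def uniformMarginal (n : ℕ) : ℕ → ℝ := fun i => if i < n then (n : ℝ)⁻¹ else 1

/-- Probability marginals with a unit dustbin entry: `aᵢ = p i` for `i < n`, and `1`
otherwise (in particular at the dustbin index `n`). -/
def probMarginal {n : ℕ} (p : Fin n → ℝ) : ℕ → ℝ := fun i =>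
  if h : i < n then p ⟨i, h⟩ else 1

/-!
Sinkhorn iterations commute with lumping rows and columns into fibers: if the kernel is
constant along fibers and the marginals are spread uniformly over each fiber, then every
scaling vector is the lumped one divided by the fiber size. Grouping the samples by feature type,
with the dustbin as its own fiber, the uniform marginals `1/n` lump to the empirical frequencies,
so the aggregated sampled plan is *exactly* the reweighted plan on the fixed features with the
empirical frequencies as marginals. Near positive marginals all Sinkhorn denominators are
positive, so this plan depends continuously on the marginals; the empirical frequencies tend to
`pA`, `pB` by the strong law of large numbers, and the continuous mapping theorem concludes.
-/

def sinkhornPlan (nA nB : ℕ) (K : ℕ → ℕ → ℝ) (a b : ℕ → ℝ) (L i j : ℕ) : ℝ :=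
  (sinkhorn nA nB K a b L).1 i * K i j * (sinkhorn nA nB K a b L).2 j

section Fibers

variable {α β 𝕜 : Type*} [Semifield 𝕜] [CharZero 𝕜]

lemma sum_const_div_card (s : Finset α) {c : 𝕜} (h : #s = 0 → c = 0) :
    ∑ _x ∈ s, c / #s = c := by
  rw [sum_const, nsmul_eq_mul, ← mul_div_assoc,
    mul_div_cancel_left_of_imp fun h0 => h (Nat.cast_eq_zero.1 h0)]

lemma sum_div_card_fiber [DecidableEq β] {s : Finset α} {t : Finset β} {τ : α → β}
    (hτ : ∀ x ∈ s, τ x ∈ t) (g : β → 𝕜) (hg : ∀ y ∈ t, #{x ∈ s | τ x = y} = 0 → g y = 0) :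
    ∑ x ∈ s, g (τ x) / #{x' ∈ s | τ x' = τ x} = ∑ y ∈ t, g y := by
  rw [← sum_fiberwise_of_maps_to hτ]
  refine sum_congr rfl fun y hy => ?_
  calc ∑ x ∈ s with τ x = y, g (τ x) / #{x' ∈ s | τ x' = τ x}
      = ∑ x ∈ s with τ x = y, g y / #{x ∈ s | τ x = y} :=
        sum_congr rfl fun x hx => by rw [(mem_filter.1 hx).2]
    _ = g y := sum_const_div_card _ (hg y hy)

end Fibers

section Lumping

variable {nA nB mA mB : ℕ} {KS K : ℕ → ℕ → ℝ} {a b A B : ℕ → ℝ} {σ τ : ℕ → ℕ}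

lemma sinkhorn_fst_eq_zero {i : ℕ} (h : a i = 0) (m : ℕ) : (sinkhorn nA nB K a b m).1 i = 0 := by
  cases m <;> simp [sinkhorn, h]

lemma sinkhorn_snd_eq_zero {j : ℕ} (h : b j = 0) (m : ℕ) : (sinkhorn nA nB K a b m).2 j = 0 := by
  cases m <;> simp [sinkhorn, h]

lemma div_sum_mul_lump {f F x X : ℕ → ℝ} {c r R : ℝ}
    (hτ : ∀ l ∈ range (nB + 1), τ l ∈ range (mB + 1))
    (hf : ∀ l ∈ range (nB + 1), f l = F (τ l))
    (hx : ∀ l ∈ range (nB + 1), x l = X (τ l) / #{l' ∈ range (nB + 1) | τ l' = τ l})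
    (hX : ∀ j ∈ range (mB + 1), #{l ∈ range (nB + 1) | τ l = j} = 0 → X j = 0)
    (hr : r = R / c) :
    r / ∑ l ∈ range (nB + 1), f l * x l = (R / ∑ j ∈ range (mB + 1), F j * X j) / c := by
  rw [← sum_div_card_fiber hτ (fun j => F j * X j) fun j hj h0 => by rw [hX j hj h0, mul_zero],
    hr, div_right_comm]
  congr 2
  refine sum_congr rfl fun l hl => ?_
  rw [hf l hl, hx l hl, mul_div_assoc]

variable (hσ : ∀ k ∈ range (nA + 1), σ k ∈ range (mA + 1))
  (hτ : ∀ l ∈ range (nB + 1), τ l ∈ range (mB + 1))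
  (hK : ∀ k ∈ range (nA + 1), ∀ l ∈ range (nB + 1), KS k l = K (σ k) (τ l))
  (ha : ∀ k ∈ range (nA + 1), a k = A (σ k) / #{k' ∈ range (nA + 1) | σ k' = σ k})
  (hA : ∀ i ∈ range (mA + 1), #{k ∈ range (nA + 1) | σ k = i} = 0 → A i = 0)
  (hb : ∀ l ∈ range (nB + 1), b l = B (τ l) / #{l' ∈ range (nB + 1) | τ l' = τ l})
  (hB : ∀ j ∈ range (mB + 1), #{l ∈ range (nB + 1) | τ l = j} = 0 → B j = 0)
include hσ hτ hK ha hA hb hB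

theorem sinkhorn_lump (m : ℕ) :
    (∀ k ∈ range (nA + 1), (sinkhorn nA nB KS a b m).1 k
      = (sinkhorn mA mB K A B m).1 (σ k) / #{k' ∈ range (nA + 1) | σ k' = σ k}) ∧
    (∀ l ∈ range (nB + 1), (sinkhorn nA nB KS a b m).2 l
      = (sinkhorn mA mB K A B m).2 (τ l) / #{l' ∈ range (nB + 1) | τ l' = τ l}) := by
  induction m with
  | zero => exact ⟨ha, hb⟩
  | succ m ih =>
    have hu : ∀ k ∈ range (nA + 1), (sinkhorn nA nB KS a b (m + 1)).1 k
        = (sinkhorn mA mB K A B (m + 1)).1 (σ k) / #{k' ∈ range (nA + 1) | σ k' = σ k} :=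
      fun k hk => div_sum_mul_lump hτ (hK k hk) ih.2
        (fun j hj h0 => sinkhorn_snd_eq_zero (hB j hj h0) m) (ha k hk)
    exact ⟨hu, fun l hl => div_sum_mul_lump hσ (fun k hk => hK k hk l hl) hu
      (fun i hi h0 => sinkhorn_fst_eq_zero (hA i hi h0) (m + 1)) (hb l hl)⟩

theorem sum_fiber_sinkhornPlan (L : ℕ) {i j : ℕ} (hi : i ∈ range (mA + 1))
    (hj : j ∈ range (mB + 1)) :
    ∑ k ∈ range (nA + 1) with σ k = i, ∑ l ∈ range (nB + 1) with τ l = j,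
        sinkhornPlan nA nB KS a b L k l = sinkhornPlan mA mB K A B L i j := by
  obtain ⟨hu, hv⟩ := sinkhorn_lump hσ hτ hK ha hA hb hB L
  have hrow : ∑ k ∈ range (nA + 1) with σ k = i, (sinkhorn nA nB KS a b L).1 k
      = (sinkhorn mA mB K A B L).1 i := by
    rw [← sum_const_div_card _ fun h0 => sinkhorn_fst_eq_zero (hA i hi h0) L]
    refine sum_congr rfl fun k hk => ?_
    obtain ⟨hkA, rfl⟩ := mem_filter.1 hk
    exact hu k hkA
  have hcol : ∑ l ∈ range (nB + 1) with τ l = j, (sinkhorn nA nB KS a b L).2 l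
      = (sinkhorn mA mB K A B L).2 j := by
    rw [← sum_const_div_card _ fun h0 => sinkhorn_snd_eq_zero (hB j hj h0) L]
    refine sum_congr rfl fun l hl => ?_
    obtain ⟨hlB, rfl⟩ := mem_filter.1 hl
    exact hv l hlB
  rw [sinkhornPlan, ← hrow, ← hcol, sum_mul, sum_mul]
  refine sum_congr rfl fun k hk => ?_
  rw [mul_sum]
  refine sum_congr rfl fun l hl => ?_
  obtain ⟨hkA, rfl⟩ := mem_filter.1 hk
  obtain ⟨hlB, rfl⟩ := mem_filter.1 hl
  rw [sinkhornPlan, hK k hkA l hlB]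

end Lumping

section Continuity

variable {nA nB : ℕ} {K : ℕ → ℕ → ℝ}

lemma sinkhorn_pos (hK : ∀ i j, 0 < K i j) {a b : ℕ → ℝ} (ha : ∀ i, 0 < a i) (hb : ∀ j, 0 < b j)
    (m : ℕ) : (∀ i, 0 < (sinkhorn nA nB K a b m).1 i) ∧ ∀ j, 0 < (sinkhorn nA nB K a b m).2 j := by
  induction m with
  | zero => exact ⟨ha, hb⟩
  | succ m ih =>
    have hu : ∀ i, 0 < (sinkhorn nA nB K a b (m + 1)).1 i := fun i =>
      div_pos (ha i) (sum_pos (fun j _ => mul_pos (hK i j) (ih.2 j)) nonempty_range_add_one)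
    exact ⟨hu, fun j =>
      div_pos (hb j) (sum_pos (fun i _ => mul_pos (hK i j) (hu i)) nonempty_range_add_one)⟩

theorem continuousAt_sinkhorn (hK : ∀ i j, 0 < K i j) {a b : ℕ → ℝ} (ha : ∀ i, 0 < a i)
    (hb : ∀ j, 0 < b j) (m : ℕ) :
    ContinuousAt (fun ab : (ℕ → ℝ) × (ℕ → ℝ) => sinkhorn nA nB K ab.1 ab.2 m) (a, b) := by
  induction m with
  | zero => exact continuousAt_id
  | succ m ih =>
    obtain ⟨-, hv_pos⟩ := sinkhorn_pos hK ha hb m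
    obtain ⟨hu_pos, -⟩ := sinkhorn_pos hK ha hb (m + 1)
    have hu : ContinuousAt
        (fun ab : (ℕ → ℝ) × (ℕ → ℝ) => (sinkhorn nA nB K ab.1 ab.2 (m + 1)).1) (a, b) :=
      continuousAt_pi.2 fun i => ((continuous_apply i).continuousAt.comp continuousAt_fst).div
        (tendsto_finsetSum _ fun j _ => continuousAt_const.mul
          ((continuous_apply j).continuousAt.comp (continuousAt_snd.comp ih)))
        (sum_pos (fun j _ => mul_pos (hK i j) (hv_pos j)) nonempty_range_add_one).ne'
    exact hu.prodMk <| continuousAt_pi.2 fun j =>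
      ((continuous_apply j).continuousAt.comp continuousAt_snd).div
        (tendsto_finsetSum _ fun i _ => continuousAt_const.mul
          ((continuous_apply i).continuousAt.comp hu))
        (sum_pos (fun i _ => mul_pos (hK i j) (hu_pos i)) nonempty_range_add_one).ne'

lemma continuous_probMarginal {n : ℕ} : Continuous (probMarginal : (Fin n → ℝ) → ℕ → ℝ) :=
  continuous_pi fun i => by
    by_cases hi : i < n
    · simpa [probMarginal, hi] using continuous_apply (⟨i, hi⟩ : Fin n)
    · simpa [probMarginal, hi] using continuous_const

lemma probMarginal_pos {n : ℕ} {p : Fin n → ℝ} (hp : ∀ i, 0 < p i) (i : ℕ) :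
    0 < probMarginal p i := by
  unfold probMarginal
  split_ifs
  exacts [hp _, one_pos]

theorem continuousAt_sinkhornPlan_probMarginal (hK : ∀ i j, 0 < K i j) {p : Fin nA → ℝ}
    {q : Fin nB → ℝ} (hp : ∀ i, 0 < p i) (hq : ∀ j, 0 < q j) (L i j : ℕ) :
    ContinuousAt (fun pq : (Fin nA → ℝ) × (Fin nB → ℝ) =>
      sinkhornPlan nA nB K (probMarginal pq.1) (probMarginal pq.2) L i j) (p, q) := by
  have h : ContinuousAt (fun pq : (Fin nA → ℝ) × (Fin nB → ℝ) =>
      sinkhorn nA nB K (probMarginal pq.1) (probMarginal pq.2) L) (p, q) :=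
    ContinuousAt.comp (f := Prod.map probMarginal probMarginal)
      (g := fun ab : (ℕ → ℝ) × (ℕ → ℝ) => sinkhorn nA nB K ab.1 ab.2 L)
      (continuousAt_sinkhorn hK (probMarginal_pos hp) (probMarginal_pos hq) L)
      (continuous_probMarginal.prodMap continuous_probMarginal).continuousAt
  exact (((continuous_apply i).continuousAt.comp (continuousAt_fst.comp h)).mul
    continuousAt_const).mul ((continuous_apply j).continuousAt.comp (continuousAt_snd.comp h))

end Continuity

section Sampling

def empiricalFreq {α : Type*} [DecidableEq α] (n : ℕ) (x : ℕ → α) (i : α) : ℝ :=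
  #{k ∈ range n | x k = i} / n

def labelWithDustbin (n m : ℕ) (x : ℕ → Fin m) (k : ℕ) : ℕ := if k < n then x k else m

variable {n m : ℕ} {x : ℕ → Fin m}

lemma labelWithDustbin_mem_range (k : ℕ) : labelWithDustbin n m x k ∈ range (m + 1) := by
  unfold labelWithDustbin
  split_ifs <;> simp [(x k).isLt.le]

lemma filter_labelWithDustbin_eq (i : Fin m) :
    {k ∈ range (n + 1) | labelWithDustbin n m x k = i} = {k ∈ range n | x k = i} := by
  ext k
  rw [mem_filter, mem_filter, mem_range, mem_range, labelWithDustbin]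
  split_ifs with hk
  · simp [hk, Fin.val_inj]
    omega
  · simp [hk, i.isLt.ne']

lemma filter_labelWithDustbin_dustbin :
    {k ∈ range (n + 1) | labelWithDustbin n m x k = m} = {n} := by
  ext k
  rw [mem_filter, mem_range, mem_singleton, labelWithDustbin]
  split_ifs with hk
  · simp [(x k).isLt.ne, hk.ne]
  · omega

lemma uniformMarginal_eq_lump {k : ℕ} (hk : k ∈ range (n + 1)) :
    uniformMarginal n k = probMarginal (empiricalFreq n x) (labelWithDustbin n m x k)
      / #{k' ∈ range (n + 1) | labelWithDustbin n m x k' = labelWithDustbin n m x k} := by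
  by_cases hkn : k < n
  · have hcard : (#{k' ∈ range n | x k' = x k} : ℝ) ≠ 0 :=
      Nat.cast_ne_zero.2 (card_ne_zero.2 ⟨k, mem_filter.2 ⟨mem_range.2 hkn, rfl⟩⟩)
    rw [show labelWithDustbin n m x k = x k from if_pos hkn, filter_labelWithDustbin_eq]
    simp only [uniformMarginal, if_pos hkn, probMarginal, Fin.is_lt, dif_pos, Fin.eta,
      empiricalFreq]
    field_simp
  · obtain rfl : k = n := by simp at hk; omega
    rw [show labelWithDustbin k m x k = m from if_neg hkn, filter_labelWithDustbin_dustbin]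
    simp [uniformMarginal, probMarginal]

lemma probMarginal_empiricalFreq_eq_zero {i : ℕ} (hi : i ∈ range (m + 1))
    (h0 : #{k ∈ range (n + 1) | labelWithDustbin n m x k = i} = 0) :
    probMarginal (empiricalFreq n x) i = 0 := by
  rcases Nat.lt_succ_iff_lt_or_eq.1 (mem_range.1 hi) with him | rfl
  · rw [← show ((⟨i, him⟩ : Fin m) : ℕ) = i from rfl, filter_labelWithDustbin_eq] at h0
    simp [probMarginal, him, empiricalFreq, h0]
  · simp [filter_labelWithDustbin_dustbin] at h0

variable {Ωt : Type*} {d nAs nBs : ℕ}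

lemma sampledScore_eq_fixedScore (fA : Fin nAs → Fin d → ℝ) (fB : Fin nBs → Fin d → ℝ) (α : ℝ)
    (ι : ℕ → Ωt → Fin nAs) (κ : ℕ → Ωt → Fin nBs) (nA nB : ℕ) (ω : Ωt) (k l : ℕ) :
    sampledScore fA fB α ι κ nA nB ω k l = fixedScore fA fB α
      (labelWithDustbin nA nAs (ι · ω) k) (labelWithDustbin nB nBs (κ · ω) l) := by
  unfold sampledScore labelWithDustbin
  by_cases hk : k < nA <;> by_cases hl : l < nB <;> simp [hk, hl, fixedScore]

theorem sum_sampled_sinkhornPlan_eq (fA : Fin nAs → Fin d → ℝ) (fB : Fin nBs → Fin d → ℝ)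
    (α : ℝ) (φ : ℝ → ℝ) (ι : ℕ → Ωt → Fin nAs) (κ : ℕ → Ωt → Fin nBs) (nA nB : ℕ) (ω : Ωt)
    (L : ℕ) (istar : Fin nAs) (jstar : Fin nBs) :
    ∑ k ∈ range nA, ∑ l ∈ range nB, (if ι k ω = istar ∧ κ l ω = jstar then
        sinkhornPlan nA nB (fun i j => φ (sampledScore fA fB α ι κ nA nB ω i j))
          (uniformMarginal nA) (uniformMarginal nB) L k l else 0)
      = sinkhornPlan nAs nBs (fun i j => φ (fixedScore fA fB α i j))
          (probMarginal (empiricalFreq nA (ι · ω))) (probMarginal (empiricalFreq nB (κ · ω)))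
          L istar jstar := by
  rw [← sum_fiber_sinkhornPlan (KS := fun i j => φ (sampledScore fA fB α ι κ nA nB ω i j))
      (a := uniformMarginal nA) (b := uniformMarginal nB)
      (fun k _ => labelWithDustbin_mem_range k) (fun l _ => labelWithDustbin_mem_range l)
      (fun k _ l _ => by rw [sampledScore_eq_fixedScore])
      (fun _ => uniformMarginal_eq_lump) (fun _ => probMarginal_empiricalFreq_eq_zero)
      (fun _ => uniformMarginal_eq_lump) (fun _ => probMarginal_empiricalFreq_eq_zero) L
      (mem_range.2 (Nat.lt_succ_of_lt istar.isLt)) (mem_range.2 (Nat.lt_succ_of_lt jstar.isLt)),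
    filter_labelWithDustbin_eq, filter_labelWithDustbin_eq, sum_filter]
  refine sum_congr rfl fun k _ => ?_
  split_ifs with hk <;> simp [hk, sum_filter]

end Sampling

namespace MeasureTheory

variable {Ω ι κ E F : Type*} [MeasurableSpace Ω] {μ : Measure Ω}

lemma TendstoInMeasure.comp_continuousAt [PseudoMetricSpace E] [PseudoMetricSpace F]
    {f : ι → Ω → E} {l : Filter ι} {y : E} {g : E → F}
    (hf : TendstoInMeasure μ f l fun _ => y) (hg : ContinuousAt g y) :
    TendstoInMeasure μ (fun i ω => g (f i ω)) l fun _ => g y := by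
  rw [tendstoInMeasure_iff_dist] at hf ⊢
  intro ε hε
  obtain ⟨δ, hδ, hball⟩ := Metric.continuousAt_iff.1 hg ε hε
  refine tendsto_of_tendsto_of_tendsto_of_le_of_le tendsto_const_nhds (hf δ hδ)
    (fun _ => zero_le) fun i => measure_mono fun ω => ?_
  contrapose
  exact fun h => (hball (not_le.1 h)).not_ge

lemma TendstoInMeasure.prodMk [PseudoEMetricSpace E] [PseudoEMetricSpace F]
    {f : ι → Ω → E} {g : κ → Ω → F} {l : Filter ι} {l' : Filter κ} {f₀ : Ω → E} {g₀ : Ω → F}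
    (hf : TendstoInMeasure μ f l f₀) (hg : TendstoInMeasure μ g l' g₀) :
    TendstoInMeasure μ (fun p ω => (f p.1 ω, g p.2 ω)) (l ×ˢ l') fun ω => (f₀ ω, g₀ ω) := by
  intro ε hε
  have h := ((hf ε hε).comp tendsto_fst).add ((hg ε hε).comp tendsto_snd)
  rw [add_zero] at h
  refine tendsto_of_tendsto_of_tendsto_of_le_of_le tendsto_const_nhds h
    (fun _ => zero_le) fun p => (measure_mono fun ω hω => ?_).trans (measure_union_le _ _)
  simpa only [Set.mem_ofPred_eq, Set.mem_union, Prod.edist_eq, le_max_iff] using hω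

lemma tendstoInMeasure_pi {β : Type*} [Fintype β] [PseudoEMetricSpace E]
    {f : ι → Ω → β → E} {l : Filter ι} {g : Ω → β → E}
    (h : ∀ b, TendstoInMeasure μ (fun i ω => f i ω b) l fun ω => g ω b) :
    TendstoInMeasure μ f l g := by
  intro ε hε
  have hsum := tendsto_finsetSum univ fun b _ => h b ε hε
  rw [sum_const_zero] at hsum
  refine tendsto_of_tendsto_of_tendsto_of_le_of_le tendsto_const_nhds hsum
    (fun _ => zero_le) fun i => (measure_mono fun ω hω => ?_).trans (measure_iUnion_fintype_le _ _)
  have hω : ε ≤ edist (f i ω) (g ω) := hω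
  rw [edist_pi_def] at hω
  obtain ⟨b, -, hb⟩ := (Finset.le_sup_iff hε).1 hω
  exact Set.mem_iUnion.2 ⟨b, hb⟩

lemma TendstoInMeasure.tendstoInProb [PseudoMetricSpace E] {X : ι → Ω → E}
    {l : Filter ι} {Y : Ω → E} (h : TendstoInMeasure μ X l Y) : TendstoInProb μ l X Y := fun ε hε =>
  tendsto_of_tendsto_of_tendsto_of_le_of_le tendsto_const_nhds
    (tendstoInMeasure_iff_dist.1 h ε hε) (fun _ => zero_le)
    fun _ => measure_mono fun _ hω => le_of_lt (α := ℝ) hω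

end MeasureTheory

section LawOfLargeNumbers

variable {Ω α : Type*} [MeasurableSpace Ω] {P : Measure Ω} [IsFiniteMeasure P]
  [MeasurableSpace α] [MeasurableSingletonClass α] [DecidableEq α] {X : ℕ → Ω → α}

theorem tendstoInMeasure_empiricalFreq (hX : ∀ k, Measurable (X k))
    (hindep : Pairwise fun k l => IndepFun (X k) (X l) P)
    (hident : ∀ k, IdentDistrib (X k) (X 0) P P) (i : α) :
    TendstoInMeasure P (fun n ω => empiricalFreq n (X · ω) i) atTop
      fun _ => P.real {ω | X 0 ω = i} := by
  set g : α → ℝ := ({i} : Set α).indicator 1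
  have hg : Measurable g := measurable_one.indicator (measurableSet_singleton i)
  have hfreq : ∀ n ω, empiricalFreq n (X · ω) i = (n : ℝ)⁻¹ • ∑ k ∈ range n, g (X k ω) := by
    intro n ω
    rw [empiricalFreq, natCast_card_filter, smul_eq_mul, div_eq_inv_mul]
    congr 1
    exact sum_congr rfl fun k _ => by
      simp only [g, Set.indicator_apply, Set.mem_singleton_iff, Pi.one_apply]
  have hg0 : (fun ω => g (X 0 ω)) = (X 0 ⁻¹' {i}).indicator 1 :=
    funext fun _ => (Set.indicator_comp_right (X 0)).symm
  have hmean : P[fun ω => g (X 0 ω)] = P.real {ω | X 0 ω = i} := by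
    rw [hg0, integral_indicator_one ((hX 0) (measurableSet_singleton i))]
    rfl
  have hint : Integrable (fun ω => g (X 0 ω)) P := by
    rw [hg0]
    exact (integrable_const 1).indicator ((hX 0) (measurableSet_singleton i))
  have hslln := strong_law_ae (fun k ω => g (X k ω)) hint
    (fun k l hkl => (hindep hkl).comp hg hg) fun k => (hident k).comp hg
  rw [hmean] at hslln
  simp_rw [hfreq]
  refine tendstoInMeasure_of_tendsto_ae (fun n => Measurable.aestronglyMeasurable ?_) hslln
  fun_prop

theorem tendstoInMeasure_empiricalFreq_of_law [Fintype α] {p : α → ℝ} (hp : ∀ i, 0 ≤ p i)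
    (hX : ∀ k, Measurable (X k)) (hindep : iIndepFun X P)
    (hlaw : ∀ k i, P {ω | X k ω = i} = ENNReal.ofReal (p i)) :
    TendstoInMeasure P (fun n ω => empiricalFreq n (X · ω)) atTop fun _ => p := by
  have hident (k : ℕ) : IdentDistrib (X k) (X 0) P P := by
    refine ⟨(hX k).aemeasurable, (hX 0).aemeasurable, Measure.ext_of_singleton fun i => ?_⟩
    rw [Measure.map_apply (hX k) (measurableSet_singleton i),
      Measure.map_apply (hX 0) (measurableSet_singleton i)]
    exact (hlaw k i).trans (hlaw 0 i).symm
  refine tendstoInMeasure_pi fun i => ?_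
  convert tendstoInMeasure_empiricalFreq hX (fun k l hkl => hindep.indepFun hkl) hident i
  rw [measureReal_def, hlaw 0 i, ENNReal.toReal_ofReal (hp i)]

end LawOfLargeNumbers

theorem reweighted_optimal_transport_asymptotic_general
    {Ω : Type*} [MeasurableSpace Ω] (P : Measure Ω) [IsProbabilityMeasure P]
    (d nAs nBs : ℕ)
    (fAstar : Fin nAs → Fin d → ℝ) (fBstar : Fin nBs → Fin d → ℝ)
    (pA : Fin nAs → ℝ) (pB : Fin nBs → ℝ)
    (hpA_pos : ∀ i, 0 < pA i)
    (hpB_pos : ∀ j, 0 < pB j)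
    (α : ℝ) (ε : ℝ) (L : ℕ)
    (ι : ℕ → Ω → Fin nAs) (κ : ℕ → Ω → Fin nBs)
    (hι_meas : ∀ k, Measurable (ι k)) (hκ_meas : ∀ l, Measurable (κ l))
    -- each `ι k` has law `pA`, each `κ l` has law `pB`
    (hι_law : ∀ k i, P {ω | ι k ω = i} = ENNReal.ofReal (pA i))
    (hκ_law : ∀ l j, P {ω | κ l ω = j} = ENNReal.ofReal (pB j))
    -- each sequence is independent, and the two sequences are independent of each other
    (hι_indep : iIndepFun ι P)
    (hκ_indep : iIndepFun κ P) :
    ∀ (istar : Fin nAs) (jstar : Fin nBs),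
      TendstoInProb P (atTop : Filter (ℕ × ℕ))
        (fun nAB ω =>
          let Km : ℕ → ℕ → ℝ := fun i j =>
            Real.exp (sampledScore fAstar fBstar α ι κ nAB.1 nAB.2 ω i j / ε)
          let uv := sinkhorn nAB.1 nAB.2 Km (uniformMarginal nAB.1) (uniformMarginal nAB.2) L
          ∑ k ∈ Finset.range nAB.1, ∑ l ∈ Finset.range nAB.2,
            if ι k ω = istar ∧ κ l ω = jstar then uv.1 k * Km k l * uv.2 l else 0)
        (fun _ =>
          let Km : ℕ → ℕ → ℝ := fun i j =>
            Real.exp (fixedScore fAstar fBstar α i j / ε)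
          let uv := sinkhorn nAs nBs Km (probMarginal pA) (probMarginal pB) L
          uv.1 istar * Km istar jstar * uv.2 jstar) := by
  intro istar jstar
  have hA : TendstoInMeasure P (fun n ω => empiricalFreq n (ι · ω)) atTop fun _ => pA :=
    tendstoInMeasure_empiricalFreq_of_law (fun i => (hpA_pos i).le) hι_meas hι_indep hι_law
  have hB : TendstoInMeasure P (fun n ω => empiricalFreq n (κ · ω)) atTop fun _ => pB :=
    tendstoInMeasure_empiricalFreq_of_law (fun j => (hpB_pos j).le) hκ_meas hκ_indep hκ_law
  have hfreq := hA.prodMk hB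
  rw [prod_atTop_atTop_eq] at hfreq
  have hplan := continuousAt_sinkhornPlan_probMarginal
    (K := fun i j => Real.exp (fixedScore fAstar fBstar α i j / ε)) (fun _ _ => Real.exp_pos _)
    hpA_pos hpB_pos L istar jstar
  convert (hfreq.comp_continuousAt hplan).tendstoInProb using 1
  · funext nAB ω
    exact sum_sampled_sinkhornPlan_eq fAstar fBstar α (fun s => Real.exp (s / ε)) ι κ nAB.1 nAB.2
      ω L istar jstar
  · rfl

/-- asymptotic equivalence of Sinkhorn optimal-transport matching on i.i.d.
sampled features (uniform marginals) and reweighted Sinkhorn matching on the fixed features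
(probability marginals).  Samples `k ∈ {1,…,n_A}` are modelled as `k ∈ Finset.range n_A`
(0-based), with `f_{A,k} = fAstar (ι k)` and `f_{B,l} = fBstar (κ l)`. -/
theorem reweighted_optimal_transport_asymptotic
    {Ω : Type*} [MeasurableSpace Ω] (P : Measure Ω) [IsProbabilityMeasure P]
    (d nAs nBs : ℕ) (hd : 0 < d) (hnAs : 0 < nAs) (hnBs : 0 < nBs)
    (fAstar : Fin nAs → Fin d → ℝ) (fBstar : Fin nBs → Fin d → ℝ)
    (pA : Fin nAs → ℝ) (pB : Fin nBs → ℝ)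
    (hpA_pos : ∀ i, 0 < pA i) (hpA_sum : ∑ i, pA i = 1)
    (hpB_pos : ∀ j, 0 < pB j) (hpB_sum : ∑ j, pB j = 1)
    (α : ℝ) (ε : ℝ) (hε : 0 < ε) (L : ℕ)
    (ι : ℕ → Ω → Fin nAs) (κ : ℕ → Ω → Fin nBs)
    (hι_meas : ∀ k, Measurable (ι k)) (hκ_meas : ∀ l, Measurable (κ l))
    -- each `ι k` has law `pA`, each `κ l` has law `pB`
    (hι_law : ∀ k i, P {ω | ι k ω = i} = ENNReal.ofReal (pA i))
    (hκ_law : ∀ l j, P {ω | κ l ω = j} = ENNReal.ofReal (pB j))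
    -- each sequence is independent, and the two sequences are independent of each other
    (hι_indep : iIndepFun ι P)
    (hκ_indep : iIndepFun κ P)
    (h_cross : IndepFun (fun ω k => ι k ω) (fun ω l => κ l ω) P) :
    ∀ (istar : Fin nAs) (jstar : Fin nBs),
      TendstoInProb P (atTop : Filter (ℕ × ℕ))
        (fun nAB ω =>
          let Km : ℕ → ℕ → ℝ := fun i j =>
            Real.exp (sampledScore fAstar fBstar α ι κ nAB.1 nAB.2 ω i j / ε)
          let uv := sinkhorn nAB.1 nAB.2 Km (uniformMarginal nAB.1) (uniformMarginal nAB.2) L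
          ∑ k ∈ Finset.range nAB.1, ∑ l ∈ Finset.range nAB.2,
            if ι k ω = istar ∧ κ l ω = jstar then uv.1 k * Km k l * uv.2 l else 0)
        (fun _ =>
          let Km : ℕ → ℕ → ℝ := fun i j =>
            Real.exp (fixedScore fAstar fBstar α i j / ε)
          let uv := sinkhorn nAs nBs Km (probMarginal pA) (probMarginal pB) L
          uv.1 istar * Km istar jstar * uv.2 jstar) :=
  reweighted_optimal_transport_asymptotic_general P d nAs nBs fAstar fBstar pA pB hpA_pos hpB_pos α
    ε L ι κ hι_meas hκ_meas hι_law hκ_law hι_indep hκ_indep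

end
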